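/- arXiv:2402.05715 — 2 statements merged into one kernel-verified Lean document; each statement's English description precedes it below -/
import Mathlib

section
/- Let p, q be probability densities, α ∈ [0,1), p^α = (1−α)p + αq, and r^α(x) = q(x)/p^α(x). For any measurable function f with finite relevant moments, E_q[f] − ((1−α)/2) E_p[f²] − (α/2) E_q[f²] − 1/2 ≤ PE(p^α‖q), with equality when f = r^α. -/
open MeasureTheory

/-- Variational lower bound for the relative Pearson divergence:
`E_q[f] − ((1−α)/2)E_p[f²] − (α/2)E_q[f²] − 1/2 ≤ PE(p^α‖q)`,
with equality when `f = r^α = q/p^α`, where `p^α = (1−α)p + αq`. -/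
theorem stmt4 (d : ℕ) (α : ℝ) (hα0 : 0 ≤ α) (hα1 : α < 1)
    (p q f : (Fin d → ℝ) → ℝ)
    (hp : Measurable p) (hq : Measurable q) (hf : Measurable f)
    (hp0 : ∀ x, 0 ≤ p x) (hq0 : ∀ x, 0 ≤ q x)
    (hpint : ∫ x, p x = 1) (hqint : ∫ x, q x = 1)
    (hppos : ∀ᵐ x ∂(volume : Measure (Fin d → ℝ)), 0 < p x)
    (hfq : Integrable (fun x => f x * q x))
    (hf2p : Integrable (fun x => f x ^ 2 * p x))
    (hf2q : Integrable (fun x => f x ^ 2 * q x))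
    (hrq : Integrable (fun x => (q x / ((1 - α) * p x + α * q x)) * q x))
    (hr2p : Integrable (fun x => (q x / ((1 - α) * p x + α * q x)) ^ 2 * p x))
    (hr2q : Integrable (fun x => (q x / ((1 - α) * p x + α * q x)) ^ 2 * q x))
    (hPE : Integrable (fun x =>
      (q x / ((1 - α) * p x + α * q x) - 1) ^ 2 * ((1 - α) * p x + α * q x))) :
    (∫ x, f x * q x) - ((1 - α) / 2) * (∫ x, f x ^ 2 * p x)
        - (α / 2) * (∫ x, f x ^ 2 * q x) - 1 / 2
      ≤ (1 / 2) * ∫ x, (q x / ((1 - α) * p x + α * q x) - 1) ^ 2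
          * ((1 - α) * p x + α * q x) ∧
    (∫ x, (q x / ((1 - α) * p x + α * q x)) * q x)
        - ((1 - α) / 2) * (∫ x, (q x / ((1 - α) * p x + α * q x)) ^ 2 * p x)
        - (α / 2) * (∫ x, (q x / ((1 - α) * p x + α * q x)) ^ 2 * q x) - 1 / 2
      = (1 / 2) * ∫ x, (q x / ((1 - α) * p x + α * q x) - 1) ^ 2
          * ((1 - α) * p x + α * q x) := by
  set P : (Fin d → ℝ) → ℝ := fun x => (1 - α) * p x + α * q x with hPdef
  set r : (Fin d → ℝ) → ℝ := fun x => q x / P x with hrdef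
  have hα1' : (0:ℝ) < 1 - α := by linarith
  -- integrability of p and q
  have hpInt : Integrable p := by
    by_contra h; rw [integral_undef h] at hpint; norm_num at hpint
  have hqInt : Integrable q := by
    by_contra h; rw [integral_undef h] at hqint; norm_num at hqint
  have hPInt : Integrable P := by
    have h1 : Integrable (fun x => (1 - α) * p x) := hpInt.const_mul (1 - α)
    have h2 : Integrable (fun x => α * q x) := hqInt.const_mul α
    exact (h1.add h2).congr (Filter.Eventually.of_forall fun x => rfl)
  have hPnn : ∀ x, 0 ≤ P x := fun x =>
    add_nonneg (mul_nonneg hα1'.le (hp0 x)) (mul_nonneg hα0 (hq0 x))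
  have hPpos : ∀ᵐ x ∂(volume : Measure (Fin d → ℝ)), 0 < P x :=
    hppos.mono fun x hx =>
      add_pos_of_pos_of_nonneg (mul_pos hα1' hx) (mul_nonneg hα0 (hq0 x))
  -- ∫ P = 1
  have hPint : ∫ x, P x = 1 := by
    have : ∫ x, P x = ∫ x, (1 - α) * p x + α * q x := rfl
    rw [this, integral_add (hpInt.const_mul (1 - α)) (hqInt.const_mul α),
      integral_const_mul, integral_const_mul, hpint, hqint]
    ring
  -- ∫ f² P
  have hf2P : Integrable (fun x => f x ^ 2 * P x) := by
    have h1 : Integrable (fun x => (1 - α) * (f x ^ 2 * p x)) := hf2p.const_mul _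
    have h2 : Integrable (fun x => α * (f x ^ 2 * q x)) := hf2q.const_mul _
    exact (h1.add h2).congr (Filter.Eventually.of_forall fun x => by
      simp only [Pi.add_apply, hPdef]; ring)
  have hf2Pint : ∫ x, f x ^ 2 * P x
      = (1 - α) * (∫ x, f x ^ 2 * p x) + α * (∫ x, f x ^ 2 * q x) := by
    have : ∫ x, f x ^ 2 * P x
        = ∫ x, ((1 - α) * (f x ^ 2 * p x) + α * (f x ^ 2 * q x)) :=
      integral_congr_ae (Filter.Eventually.of_forall fun x => by
        simp only [hPdef]; ring)
    rw [this, integral_add (hf2p.const_mul _) (hf2q.const_mul _),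
      integral_const_mul, integral_const_mul]
  have hr2P : Integrable (fun x => r x ^ 2 * P x) := by
    have h1 : Integrable (fun x => (1 - α) * (r x ^ 2 * p x)) := hr2p.const_mul _
    have h2 : Integrable (fun x => α * (r x ^ 2 * q x)) := hr2q.const_mul _
    exact (h1.add h2).congr (Filter.Eventually.of_forall fun x => by
      simp only [Pi.add_apply, hPdef]; ring)
  have hr2Pint : ∫ x, r x ^ 2 * P x
      = (1 - α) * (∫ x, r x ^ 2 * p x) + α * (∫ x, r x ^ 2 * q x) := by
    have : ∫ x, r x ^ 2 * P x
        = ∫ x, ((1 - α) * (r x ^ 2 * p x) + α * (r x ^ 2 * q x)) :=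
      integral_congr_ae (Filter.Eventually.of_forall fun x => by
        simp only [hPdef]; ring)
    rw [this, integral_add (hr2p.const_mul _) (hr2q.const_mul _),
      integral_const_mul, integral_const_mul]
  -- a.e. identities
  have eqr2 : ∀ᵐ x ∂(volume : Measure (Fin d → ℝ)),
      r x ^ 2 * P x = r x * q x := hPpos.mono fun x hx => by
    simp only [hrdef]
    field_simp
  have hr2Pq : ∫ x, r x ^ 2 * P x = ∫ x, r x * q x := integral_congr_ae eqr2
  have eq1 : ∀ᵐ x ∂(volume : Measure (Fin d → ℝ)),
      (r x - 1) ^ 2 * P x = r x * q x - 2 * q x + P x := hPpos.mono fun x hx => by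
    simp only [hrdef]
    field_simp
    ring
  have hrqsub : Integrable (fun x => r x * q x - 2 * q x) :=
    hrq.sub (hqInt.const_mul 2)
  have hPEint : ∫ x, (r x - 1) ^ 2 * P x = (∫ x, r x * q x) - 1 := by
    rw [integral_congr_ae eq1, integral_add hrqsub hPInt,
      integral_sub hrq (hqInt.const_mul 2), integral_const_mul, hqint, hPint]
    ring
  have eq2 : ∀ᵐ x ∂(volume : Measure (Fin d → ℝ)),
      (f x - r x) ^ 2 * P x = f x ^ 2 * P x - 2 * (f x * q x) + r x * q x :=
    hPpos.mono fun x hx => by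
      simp only [hrdef]
      field_simp
      ring
  have hnn : 0 ≤ ∫ x, (f x - r x) ^ 2 * P x :=
    integral_nonneg fun x => mul_nonneg (sq_nonneg _) (hPnn x)
  have hf2Psub : Integrable (fun x => f x ^ 2 * P x - 2 * (f x * q x)) :=
    hf2P.sub (hfq.const_mul 2)
  have hsplit : ∫ x, (f x - r x) ^ 2 * P x
      = (∫ x, f x ^ 2 * P x) - 2 * (∫ x, f x * q x) + ∫ x, r x * q x := by
    rw [integral_congr_ae eq2, integral_add hf2Psub hrq,
      integral_sub hf2P (hfq.const_mul 2), integral_const_mul]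
  have key : 0 ≤ (∫ x, f x ^ 2 * P x) - 2 * (∫ x, f x * q x) + ∫ x, r x * q x := by
    rw [← hsplit]; exact hnn
  constructor
  · show _ ≤ (1/2) * ∫ x, (r x - 1) ^ 2 * P x
    rw [hPEint]
    rw [hf2Pint] at key
    set IA := ∫ x, f x ^ 2 * p x
    set IB := ∫ x, f x ^ 2 * q x
    set IC := ∫ x, f x * q x
    set ID := ∫ x, r x * q x
    linarith
  · show (∫ x, r x * q x) - ((1-α)/2) * (∫ x, r x ^ 2 * p x)
        - (α/2) * (∫ x, r x ^ 2 * q x) - 1/2 = (1/2) * ∫ x, (r x - 1) ^ 2 * P x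
    rw [hPEint]
    have h := hr2Pq
    rw [hr2Pint] at h
    set IA := ∫ x, r x ^ 2 * p x
    set IB := ∫ x, r x ^ 2 * q x
    set ID := ∫ x, r x * q x
    linarith
end

section
/- For probability densities p, q and α ∈ (0,1), the relative Pearson divergence satisfies PE(p^α‖q) ≤ (1−α)/(2α), where p^α = (1−α)p + αq. -/
open MeasureTheory

lemma ptwise_bound (α a b : ℝ) (hα0 : 0 < α) (hα1 : α < 1)
    (ha : 0 ≤ a) (hb : 0 ≤ b) :
    (b / ((1 - α) * a + α * b) - 1) ^ 2 * ((1 - α) * a + α * b)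
      ≤ b * (1 / α - 2) + ((1 - α) * a + α * b) := by
  set s := (1 - α) * a + α * b with hs
  have h1α : 0 < 1 - α := by linarith
  have hs0 : 0 ≤ s := by positivity
  rcases eq_or_lt_of_le hs0 with h | h
  · have hb0 : b = 0 := by nlinarith
    simp [← h, hb0]
  · have hbs : α * b ≤ s := by nlinarith
    have key : (b / s - 1) ^ 2 * s = b ^ 2 / s - 2 * b + s := by
      field_simp
      ring
    rw [key]
    have h2 : b ^ 2 / s ≤ b / α := by
      rw [div_le_div_iff₀ h hα0]
      nlinarith
    have : b * (1 / α - 2) = b / α - 2 * b := by ring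
    linarith

/-- Boundedness of the relative Pearson divergence:
`PE(p^α‖q) ≤ (1−α)/(2α)` for `α ∈ (0,1)`, where `p^α = (1−α)p + αq`. -/
theorem stmt13 (d : ℕ) (α : ℝ) (hα0 : 0 < α) (hα1 : α < 1)
    (p q : (Fin d → ℝ) → ℝ)
    (hp : Measurable p) (hq : Measurable q)
    (hp0 : ∀ x, 0 ≤ p x) (hq0 : ∀ x, 0 ≤ q x)
    (hpint : ∫ x, p x = 1) (hqint : ∫ x, q x = 1) :
    (1 / 2) * ∫ x, (q x / ((1 - α) * p x + α * q x) - 1) ^ 2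
        * ((1 - α) * p x + α * q x)
      ≤ (1 - α) / (2 * α) := by
  have hpI : Integrable p := by
    by_contra h
    rw [integral_undef h] at hpint
    norm_num at hpint
  have hqI : Integrable q := by
    by_contra h
    rw [integral_undef h] at hqint
    norm_num at hqint
  set f : (Fin d → ℝ) → ℝ := fun x =>
    (q x / ((1 - α) * p x + α * q x) - 1) ^ 2 * ((1 - α) * p x + α * q x)
    with hf
  set g : (Fin d → ℝ) → ℝ := fun x =>
    q x * (1 / α - 2) + ((1 - α) * p x + α * q x) with hg
  have hgI : Integrable g := ((hqI.mul_const _).add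
    ((hpI.const_mul _).add (hqI.const_mul _)))
  have hfg : ∀ x, f x ≤ g x := fun x =>
    ptwise_bound α (p x) (q x) hα0 hα1 (hp0 x) (hq0 x)
  have hf0 : ∀ x, 0 ≤ f x := by
    intro x
    have : 0 ≤ (1 - α) * p x + α * q x := by
      have := hp0 x; have := hq0 x; nlinarith
    positivity
  have hfm : AEStronglyMeasurable f volume := by
    apply Measurable.aestronglyMeasurable
    fun_prop
  have hfI : Integrable f := by
    refine hgI.mono' hfm (Filter.Eventually.of_forall fun x => ?_)
    rw [Real.norm_of_nonneg (hf0 x)]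
    exact hfg x
  have hle : ∫ x, f x ≤ ∫ x, g x := integral_mono hfI hgI hfg
  have hgval : ∫ x, g x = (1 - α) / α := by
    have h1 : Integrable (fun x => (1 - α) * p x + α * q x) :=
      (hpI.const_mul _).add (hqI.const_mul _)
    have h2 : Integrable (fun x => q x * (1 / α - 2)) := hqI.mul_const _
    have h3 : Integrable (fun x => (1 - α) * p x) := hpI.const_mul _
    have h4 : Integrable (fun x => α * q x) := hqI.const_mul _
    rw [hg]
    rw [integral_add h2 h1, integral_add h3 h4,
      MeasureTheory.integral_mul_const, integral_const_mul, integral_const_mul,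
      hpint, hqint]
    field_simp
    ring
  rw [hgval] at hle
  have : (1 - α) / (2 * α) = (1 / 2) * ((1 - α) / α) := by ring
  rw [this]
  have h2 : (0:ℝ) < 1 / 2 := by norm_num
  calc (1 / 2) * ∫ x, f x ≤ (1 / 2) * ((1 - α) / α) := by nlinarith
end
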